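/- Let Ω be a measurable space, let S be a Souslin space (a metrizable topological space that is the image of a Polish space under a continuous map), and let X be a second countable Hausdorff topological space. Let {F_s}_{s∈S} be a family of compact-valued multifunctions F_s : Ω → X such that the multifunction (ω, s) ↦ F_s(ω) on Ω × S (with the product σ-algebra of the σ-algebra on Ω and the Borel σ-algebra of S) is closed-measurable. Then the multifunction ω ↦ ⋂_{s∈S} F_s(ω) is universally closed-measurable. -/

import Mathlib

/-!
Fix a closed `C`. By compactness of a single `F s₀ ω ∩ C`, the intersection `⋂ s, F s ω ∩ C` is
empty iff for some finite family `u` of basic open sets, some `F s ω ∩ C` misses `(⋃₀ u)ᶜ` and, for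
each `V ∈ u`, some `F s ω ∩ C` misses `closure V`. So the complement of the set in question is a
countable Boolean combination of projections to `Ω` of measurable subsets of `Ω × S`.

Such projections are universally measurable. Factoring the subset through a measurable map
`Ω → (ℕ → Bool)` turns the projection into the preimage of an analytic set, and an analytic set
`range g`, `g : (ℕ → ℕ) → Y`, is measurable for the completion of every finite measure by Choquet's
argument: choosing bounds `βᵢ` one coordinate at a time, the closed sets
`⋂ n, closure (g '' {x | ∀ i < n, x i ≤ βᵢ})` lie in `range g` and exhaust its outer measure.
-/

open TopologicalSpace MeasureTheory Set Filter
open scoped ENNReal Topology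

theorem Monotone.exists_measure_iUnion_le_add {α : Type*} [MeasurableSpace α] {μ : Measure α}
    {s : ℕ → Set α} (hs : Monotone s) (hμ : μ (⋃ n, s n) ≠ ∞) {δ : ℝ≥0∞} (hδ : δ ≠ 0) :
    ∃ n, μ (⋃ n, s n) ≤ μ (s n) + δ :=
  (((tendsto_measure_iUnion_atTop hs).add_const δ).eventually_const_lt
    (ENNReal.lt_add_right hμ hδ)).exists.imp fun _ => le_of_lt

section Choquet

variable {Y : Type*} [TopologicalSpace Y] [T2Space Y] [FirstCountableTopology Y]

theorem iInter_closure_image_subset_range {g : (ℕ → ℕ) → Y} (hg : Continuous g)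
    {A : ℕ → Set (ℕ → ℕ)} {β : ℕ → ℕ} (hA : ∀ n, ∀ x ∈ A n, ∀ i < n, x i ≤ β i) :
    ⋂ n, closure (g '' A n) ⊆ range g := by
  intro y hy
  obtain ⟨V, hV⟩ := (𝓝 y).exists_antitone_basis
  have hxV : ∀ n, ∃ x ∈ A n, g x ∈ V n := fun n => by
    obtain ⟨_, hyV, x, hx, rfl⟩ := mem_closure_iff_nhds.1 (mem_iInter.1 hy n) (V n) (hV.mem n)
    exact ⟨x, hx, hyV⟩
  choose x hxA hxV using hxV
  -- Clamping `x n` below `β` changes only coordinates `i ≥ n`, and lands in a compact set.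
  obtain ⟨a, -, φ, hφ, hza⟩ :=
    (isCompact_univ_pi fun i => (finite_Iic (β i)).isCompact).tendsto_subseq
      (x := fun n i => min (x n i) (β i)) fun n i _ => mem_Iic.2 (min_le_right _ _)
  have hxa : Tendsto (x ∘ φ) atTop (𝓝 a) := by
    refine tendsto_pi_nhds.2 fun i => ((continuous_apply i).tendsto a |>.comp hza).congr' ?_
    filter_upwards [eventually_gt_atTop i] with k hk
    exact min_eq_left (hA _ _ (hxA (φ k)) i (hk.trans_le hφ.le_apply))
  exact ⟨a, tendsto_nhds_unique ((hg.tendsto a).comp hxa) ((hV.tendsto hxV).comp hφ.tendsto_atTop)⟩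

variable [MeasurableSpace Y] [OpensMeasurableSpace Y]

theorem exists_isClosed_subset_range_measure_le_add {g : (ℕ → ℕ) → Y} (hg : Continuous g)
    (ν : Measure Y) [IsFiniteMeasure ν] {ε : ℝ≥0∞} (hε : ε ≠ 0) :
    ∃ B, IsClosed B ∧ B ⊆ range g ∧ ν (range g) ≤ ν B + ε := by
  obtain ⟨δ, hδ, hδε⟩ := ENNReal.exists_pos_sum_of_countable hε ℕ
  have hstep : ∀ (n : ℕ) (A : Set (ℕ → ℕ)), ∃ k : ℕ,
      ν (g '' A) ≤ ν (g '' (A ∩ {x | x n ≤ k})) + δ n := by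
    intro n A
    have hmono : Monotone fun k : ℕ => g '' (A ∩ {x | x n ≤ k}) := fun k l hkl =>
      image_mono (inter_subset_inter_right _ fun x (hx : x n ≤ k) => hx.trans hkl)
    have hU : ⋃ k : ℕ, g '' (A ∩ {x | x n ≤ k}) = g '' A := by
      rw [← image_iUnion, ← inter_iUnion,
        inter_eq_left.2 fun x _ => mem_iUnion.2 ⟨x n, le_refl (x n)⟩]
    simpa only [hU] using hmono.exists_measure_iUnion_le_add (measure_ne_top _ _)
      (ENNReal.coe_ne_zero.2 (hδ n).ne')
  choose k hk using hstep
  let A : ℕ → Set (ℕ → ℕ) := fun n => Nat.rec univ (fun m Am => Am ∩ {x | x m ≤ k m Am}) n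
  have hA_bdd : ∀ n, ∀ x ∈ A n, ∀ i < n, x i ≤ k i (A i) := by
    intro n
    induction n with
    | zero => simp
    | succ n ih =>
      rintro x ⟨hx, hxn⟩ i hi
      rcases Nat.lt_succ_iff_lt_or_eq.1 hi with hi | rfl
      exacts [ih x hx i hi, hxn]
  have hclosure_anti : Antitone fun n => closure (g '' A n) :=
    antitone_nat_of_succ_le fun n => closure_mono (image_mono inter_subset_left)
  have hA_measure : ∀ n, ν (range g) ≤ ν (g '' A n) + ∑ i ∈ Finset.range n, (δ i : ℝ≥0∞) := by
    intro n
    induction n with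
    | zero => simp [A]
    | succ n ih =>
      calc ν (range g) ≤ ν (g '' A n) + ∑ i ∈ Finset.range n, (δ i : ℝ≥0∞) := ih
        _ ≤ ν (g '' A (n + 1)) + δ n + ∑ i ∈ Finset.range n, (δ i : ℝ≥0∞) := by
          gcongr; exact hk n (A n)
        _ = ν (g '' A (n + 1)) + ∑ i ∈ Finset.range (n + 1), (δ i : ℝ≥0∞) := by
          rw [Finset.sum_range_succ]; ring
  refine ⟨⋂ n, closure (g '' A n), isClosed_iInter fun _ => isClosed_closure,
    iInter_closure_image_subset_range hg hA_bdd, ?_⟩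
  rw [hclosure_anti.measure_iInter (fun _ => isClosed_closure.nullMeasurableSet)
    ⟨0, measure_ne_top _ _⟩, ENNReal.iInf_add]
  exact le_iInf fun n => (hA_measure n).trans
    (add_le_add (measure_mono subset_closure) ((ENNReal.sum_le_tsum _).trans hδε.le))

theorem MeasureTheory.AnalyticSet.nullMeasurableSet {s : Set Y} (hs : AnalyticSet s) (ν : Measure Y)
    [IsFiniteMeasure ν] : NullMeasurableSet s ν := by
  rw [AnalyticSet] at hs
  obtain rfl | ⟨g, hg, rfl⟩ := hs
  · exact nullMeasurableSet_empty
  choose B hBc hBg hνB using fun n : ℕ => exists_isClosed_subset_range_measure_le_add hg ν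
    (ENNReal.inv_ne_zero.2 (ENNReal.natCast_ne_top n))
  have hB : MeasurableSet (⋃ n, B n) := .iUnion fun n => (hBc n).measurableSet
  refine hB.nullMeasurableSet.congr (ae_eq_of_subset_of_measure_ge (iUnion_subset hBg) ?_
    hB.nullMeasurableSet (measure_ne_top _ _))
  refine ENNReal.le_of_forall_pos_le_add fun ε hε _ => ?_
  obtain ⟨n, hn⟩ := ENNReal.exists_inv_nat_lt (ENNReal.coe_ne_zero.2 hε.ne')
  calc ν (range g) ≤ ν (B n) + (n : ℝ≥0∞)⁻¹ := hνB n
    _ ≤ ν (⋃ n, B n) + ε := add_le_add (measure_mono (subset_iUnion B n)) hn.le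

end Choquet

section Projection

variable {Ω Z : Type*} [MeasurableSpace Ω] [MeasurableSpace Z]

theorem MeasurableSet.exists_eq_preimage_prodMap_natBool {M : Set (Ω × Z)} (hM : MeasurableSet M) :
    ∃ φ : Ω → ℕ → Bool, Measurable φ ∧
      ∃ M' : Set ((ℕ → Bool) × Z), MeasurableSet M' ∧ M = Prod.map φ id ⁻¹' M' := by
  rw [← generateFrom_prod] at hM
  induction M, hM using MeasurableSpace.generateFrom_induction with
  | hC t ht =>
    obtain ⟨A, hA, B, hB, rfl⟩ := ht
    classical
    refine ⟨fun ω => if ω ∈ A then fun _ => true else fun _ => false,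
      measurable_const.ite hA measurable_const, ((fun b : ℕ → Bool => b 0) ⁻¹' {true}) ×ˢ B,
      ((measurableSet_singleton true).preimage (measurable_pi_apply 0)).prod hB, ?_⟩
    ext ⟨ω, z⟩
    by_cases hω : ω ∈ A <;> simp [hω]
  | empty => exact ⟨fun _ _ => true, measurable_const, ∅, .empty, rfl⟩
  | compl t _ ih =>
    obtain ⟨φ, hφ, M', hM', rfl⟩ := ih
    exact ⟨φ, hφ, M'ᶜ, hM'.compl, rfl⟩
  | iUnion s _ ih =>
    -- Countably many factorizations merge into one by interleaving the coordinates of their `φ`s.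
    choose φ hφ M' hM' hs using ih
    let r : ℕ → (ℕ → Bool) → ℕ → Bool := fun n b k => b (Nat.pair n k)
    have hr : ∀ n, r n ∘ (fun ω m => φ m.unpair.1 ω m.unpair.2) = φ n := fun n => by
      ext ω k; simp [r]
    refine ⟨fun ω m => φ m.unpair.1 ω m.unpair.2, by fun_prop,
      ⋃ n, Prod.map (r n) id ⁻¹' M' n, .iUnion fun n => ?_, ?_⟩
    · exact (by fun_prop : Measurable (Prod.map (r n) id)) (hM' n)
    · simp only [preimage_iUnion, ← preimage_comp, Prod.map_comp_map, hr, Function.id_comp, hs]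

theorem MeasurableSet.nullMeasurableSet_image_fst [StandardBorelSpace Z] {M : Set (Ω × Z)}
    (hM : MeasurableSet M) (μ : Measure Ω) [IsFiniteMeasure μ] :
    NullMeasurableSet (Prod.fst '' M) μ := by
  obtain ⟨φ, hφ, M', hM', rfl⟩ := hM.exists_eq_preimage_prodMap_natBool
  have : Prod.fst '' (Prod.map φ id ⁻¹' M') = φ ⁻¹' (Prod.fst '' M') := by
    ext ω; simp
  rw [this]
  exact ((hM'.analyticSet_image measurable_fst).nullMeasurableSet _).preimage
    (hφ.quasiMeasurePreserving μ)

theorem MeasurableSet.nullMeasurableSet_image_fst_of_surjective {P : Type*} [MeasurableSpace P]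
    [StandardBorelSpace P] {f : P → Z} (hf : Measurable f) (hfs : Function.Surjective f)
    {M : Set (Ω × Z)} (hM : MeasurableSet M) (μ : Measure Ω) [IsFiniteMeasure μ] :
    NullMeasurableSet (Prod.fst '' M) μ := by
  have : Prod.fst '' M = Prod.fst '' (Prod.map id f ⁻¹' M) := by
    conv_lhs => rw [← image_preimage_eq M (Function.surjective_id.prodMap hfs), image_image]
    rfl
  exact this ▸ (measurable_id.prodMap hf hM).nullMeasurableSet_image_fst μ

end Projection

theorem iInter_eq_empty_iff_exists_finite_subset_basis {X ι : Type*} [TopologicalSpace X]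
    [T2Space X] [Nonempty ι] {𝓑 : Set (Set X)} (h𝓑 : IsTopologicalBasis 𝓑) {Z : ι → Set X}
    (hZ : ∀ i, IsCompact (Z i)) :
    ⋂ i, Z i = ∅ ↔ ∃ u, (u.Finite ∧ u ⊆ 𝓑) ∧
      (∃ i, Disjoint (Z i) (⋃₀ u)ᶜ) ∧ ∀ V ∈ u, ∃ i, Disjoint (Z i) (closure V) := by
  constructor
  · intro h
    obtain ⟨i₀⟩ := ‹Nonempty ι›
    have hcover : Z i₀ ⊆ ⋃ V ∈ {V ∈ 𝓑 | ∃ i, Disjoint (Z i) (closure V)}, V := by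
      intro x hx
      obtain ⟨i, hi⟩ : ∃ i, x ∉ Z i := by simpa using (h ▸ notMem_empty x : x ∉ ⋂ i, Z i)
      obtain ⟨U, W, hU, hW, hxU, hZW, hUW⟩ := SeparatedNhds.of_isCompact_isCompact
        isCompact_singleton (hZ i) (disjoint_singleton_left.2 hi)
      obtain ⟨V, hV𝓑, hxV, hVU⟩ := h𝓑.exists_subset_of_mem_open (hxU rfl) hU
      have hVW : closure V ⊆ Wᶜ :=
        closure_minimal (fun y hy => hUW.subset_compl_right (hVU hy)) hW.isClosed_compl
      exact mem_biUnion ⟨hV𝓑, i, disjoint_compl_right.mono hZW hVW⟩ hxV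
    obtain ⟨u, hu𝓑, hu, hZu⟩ :=
      (hZ i₀).elim_finite_subcover_image (fun V hV => h𝓑.isOpen hV.1) hcover
    exact ⟨u, ⟨hu, fun V hV => (hu𝓑 hV).1⟩,
      ⟨i₀, disjoint_compl_right_iff_subset.2 (sUnion_eq_biUnion ▸ hZu)⟩, fun V hV => (hu𝓑 hV).2⟩
  · rintro ⟨u, -, ⟨i₀, hi₀⟩, hu⟩
    refine eq_empty_of_forall_notMem fun x hx => ?_
    have hxZ := mem_iInter.1 hx
    obtain ⟨V, hVu, hxV⟩ := not_notMem.1 (disjoint_left.1 hi₀ (hxZ i₀))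
    obtain ⟨i, hi⟩ := hu V hVu
    exact disjoint_left.1 hi (hxZ i) (subset_closure hxV)

theorem stmt_5_general {Ω : Type*} [MeasurableSpace Ω]
    {S : Type*} [TopologicalSpace S] [MeasurableSpace S] [BorelSpace S]
    (hS : ∃ (P : Type) (tP : TopologicalSpace P), @PolishSpace P tP ∧
      ∃ f : P → S, @Continuous P S tP _ f ∧ Function.Surjective f)
    {X : Type*} [TopologicalSpace X] [T2Space X] [SecondCountableTopology X]
    (F : S → Ω → Set X)
    (hFcp : ∀ s ω, IsCompact (F s ω))
    (hF : ∀ C : Set X, IsClosed C →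
      MeasurableSet {p : Ω × S | (F p.2 p.1 ∩ C).Nonempty}) :
    ∀ C : Set X, IsClosed C → ∀ (μ : Measure Ω), IsFiniteMeasure μ →
      NullMeasurableSet {ω | ((⋂ s, F s ω) ∩ C).Nonempty} μ := by
  intro C hC μ _
  obtain ⟨P, _, _, f, hf, hfs⟩ := hS
  borelize P
  rcases isEmpty_or_nonempty S with _ | _
  · simp
  have hmiss : ∀ D, IsClosed D → NullMeasurableSet {ω | ∃ s, Disjoint (F s ω ∩ C) D} μ := by
    intro D hD
    have hM : MeasurableSet {p : Ω × S | Disjoint (F p.2 p.1 ∩ C) D} := by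
      convert (hF _ (hC.inter hD)).compl using 1
      ext p
      simp [not_nonempty_iff_eq_empty, disjoint_iff_inter_eq_empty, inter_assoc]
    simpa [image] using hM.nullMeasurableSet_image_fst_of_surjective hf.measurable hfs μ
  have hcompl : {ω | ((⋂ s, F s ω) ∩ C).Nonempty}ᶜ =
      ⋃ u ∈ {u | u.Finite ∧ u ⊆ countableBasis X}, {ω | ∃ s, Disjoint (F s ω ∩ C) (⋃₀ u)ᶜ} ∩
        ⋂ V ∈ u, {ω | ∃ s, Disjoint (F s ω ∩ C) (closure V)} := by
    ext ω
    rw [mem_compl_iff, mem_ofPred_eq, not_nonempty_iff_eq_empty, iInter_inter,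
      iInter_eq_empty_iff_exists_finite_subset_basis (isBasis_countableBasis X)
        fun s => (hFcp s ω).inter_right hC]
    simp only [mem_iUnion₂, mem_inter_iff, mem_iInter₂, mem_ofPred_eq, exists_prop]
  rw [← compl_compl {ω | ((⋂ s, F s ω) ∩ C).Nonempty}, hcompl]
  refine (NullMeasurableSet.biUnion (countable_ofPred_finite_subset (countable_countableBasis X))
    fun u hu => (hmiss _ ?_).inter
      (.biInter hu.1.countable fun V _ => hmiss _ isClosed_closure)).compl
  exact (isOpen_sUnion fun V hV => isOpen_of_mem_countableBasis (hu.2 hV)).isClosed_compl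

/-- The intersection of a closed-measurable Souslin family of compact-valued
multifunctions into a second countable Hausdorff space is universally
closed-measurable. -/
theorem stmt_5 {Ω : Type*} [MeasurableSpace Ω]
    {S : Type*} [TopologicalSpace S] [MetrizableSpace S] [MeasurableSpace S] [BorelSpace S]
    (hS : ∃ (P : Type) (tP : TopologicalSpace P), @PolishSpace P tP ∧
      ∃ f : P → S, @Continuous P S tP _ f ∧ Function.Surjective f)
    {X : Type*} [TopologicalSpace X] [T2Space X] [SecondCountableTopology X]
    (F : S → Ω → Set X)
    (hFcp : ∀ s ω, IsCompact (F s ω))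
    (hF : ∀ C : Set X, IsClosed C →
      MeasurableSet {p : Ω × S | (F p.2 p.1 ∩ C).Nonempty}) :
    ∀ C : Set X, IsClosed C → ∀ (μ : Measure Ω), IsFiniteMeasure μ →
      NullMeasurableSet {ω | ((⋂ s, F s ω) ∩ C).Nonempty} μ :=
  stmt_5_general hS F hFcp hF
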